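/- arXiv:2205.01959 — 4 statements merged into one kernel-verified Lean document; each statement's English description precedes it below -/
import Mathlib

section
/- Let H be a complex Hilbert space. Then H is finite-dimensional over ℂ if and only if the lattice of closed subspaces of H is modular, i.e., for all closed subspaces X, Y, Z of H with X ≤ Y one has closure(X + (Z ⊓ Y)) = closure(X + Z) ⊓ Y, where + is the sum of submodules and closure denotes topological closure (Theorem 1(2)). -/
/-! In finite dimension every subspace is closed and the submodule lattice is modular.
In infinite dimension take orthonormal vectors `eₙ, fₙ` and the closed subspaces
`A = closure (span {eₙ})`, `B = closure (span {eₙ + 2⁻ⁿ fₙ})`. The vector `w = ∑ 2⁻ⁿ fₙ` lies in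
`closure (A + B)` but not in `A + B`: writing `w = a + b` forces `⟪eₙ, b⟫ = 1` for every `n`,
against Bessel's inequality. For any `v ∈ closure (A + B) \ (A + B)` the closed subspace
`Y = A + ℂ v` then breaks the modular law at `X = A`, `Z = B`, since `B ⊓ Y ≤ A` while
`v ∈ closure (A + B) ⊓ Y`. -/

open Submodule
open scoped InnerProductSpace ComplexConjugate

theorem Submodule.inf_sup_span_singleton_le {K M : Type*} [DivisionRing K] [AddCommGroup M]
    [Module K M] {A B : Submodule K M} {v : M} (hv : v ∉ A ⊔ B) :
    B ⊓ (A ⊔ K ∙ v) ≤ A :=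
  calc B ⊓ (A ⊔ K ∙ v) ≤ (A ⊔ K ∙ v) ⊓ (A ⊔ B) := inf_comm B _ ▸ inf_le_inf_left _ le_sup_right
    _ = A ⊔ (K ∙ v) ⊓ (A ⊔ B) := sup_inf_assoc_of_le _ le_sup_left
    _ = A := by rw [(disjoint_span_singleton.mpr fun h => absurd h hv).symm.eq_bot, sup_bot_eq]

theorem Submodule.exists_not_modular_of_not_isClosed_sup {𝕜 E : Type*} [NontriviallyNormedField 𝕜]
    [CompleteSpace 𝕜] [AddCommGroup E] [Module 𝕜 E] [TopologicalSpace E] [IsTopologicalAddGroup E]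
    [ContinuousSMul 𝕜 E] [T2Space E] {A B : Submodule 𝕜 E} (hA : IsClosed (A : Set E))
    (hAB : ¬IsClosed ((A ⊔ B : Submodule 𝕜 E) : Set E)) :
    ∃ Y : Submodule 𝕜 E, IsClosed (Y : Set E) ∧ A ≤ Y ∧
      (A + B ⊓ Y).topologicalClosure ≠ (A + B).topologicalClosure ⊓ Y := by
  obtain ⟨v, hv_cl, hv⟩ : ∃ v ∈ (A ⊔ B).topologicalClosure, v ∉ A ⊔ B := by
    by_contra! h
    exact hAB (isClosed_of_closure_subset fun v hv => h v (by rwa [← topologicalClosure_coe] at hv))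
  refine ⟨A ⊔ 𝕜 ∙ v, A.isClosed_sup_finiteDimensional _ hA, le_sup_left, fun h => hv ?_⟩
  have hv_mem : v ∈ (A + B ⊓ (A ⊔ 𝕜 ∙ v)).topologicalClosure :=
    h ▸ ⟨hv_cl, mem_sup_right (mem_span_singleton_self v)⟩
  rw [add_eq_sup, sup_eq_left.mpr (inf_sup_span_singleton_le hv),
    hA.submodule_topologicalClosure_eq] at hv_mem
  exact mem_sup_left hv_mem

section InnerProductSpace

variable {𝕜 E : Type*} [RCLike 𝕜] [NormedAddCommGroup E] [InnerProductSpace 𝕜 E]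

theorem inner_eq_zero_of_mem_topologicalClosure_span {s : Set E} {x z : E}
    (hx : ∀ y ∈ s, ⟪x, y⟫_𝕜 = 0) (hz : z ∈ (span 𝕜 s).topologicalClosure) : ⟪x, z⟫_𝕜 = 0 :=
  mem_orthogonal_singleton_iff_inner_right.mp <|
    (span 𝕜 s).topologicalClosure_minimal
      (span_le.mpr fun y hy => mem_orthogonal_singleton_iff_inner_right.mpr (hx y hy))
      (𝕜 ∙ x).isClosed_orthogonal hz

theorem Orthonormal.inner_eq_of_hasSum {ι : Type*} {v : ι → E} (hv : Orthonormal 𝕜 v) {c : ι → 𝕜}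
    {w : E} (hw : HasSum (fun i => c i • v i) w) (i : ι) : ⟪v i, w⟫_𝕜 = c i := by
  have hsingle : HasSum (fun j => ⟪v i, c j • v j⟫_𝕜) (⟪v i, c i • v i⟫_𝕜) :=
    hasSum_single i fun j hj => by rw [inner_smul_right, hv.inner_eq_zero hj.symm, mul_zero]
  have h : ⟪v i, w⟫_𝕜 = ⟪v i, c i • v i⟫_𝕜 := (hw.mapL (innerSL 𝕜 (v i))).unique hsingle
  rw [h, inner_smul_right, inner_self_eq_norm_sq_to_K, hv.norm_eq_one]
  simp

variable [CompleteSpace E]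

theorem exists_orthonormal_of_not_finiteDimensional (ι : Type*) [Countable ι]
    (h : ¬FiniteDimensional 𝕜 E) : ∃ u : ι → E, Orthonormal 𝕜 u := by
  obtain ⟨w, b, -⟩ := exists_hilbertBasis 𝕜 E
  have : Infinite w := by
    by_contra hw
    have : Fintype w := @Fintype.ofFinite _ (not_infinite_iff_finite.mp hw)
    exact h (Module.Finite.of_basis b.toOrthonormalBasis.toBasis)
  obtain ⟨g, hg⟩ := Countable.exists_injective_nat ι
  exact ⟨b ∘ Infinite.natEmbedding w ∘ g,
    b.orthonormal.comp _ ((Infinite.natEmbedding w).injective.comp hg)⟩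

theorem exists_isClosed_not_isClosed_sup {u : ℕ ⊕ ℕ → E} (hu : Orthonormal 𝕜 u) :
    ∃ A B : Submodule 𝕜 E, IsClosed (A : Set E) ∧ IsClosed (B : Set E) ∧
      ¬IsClosed ((A ⊔ B : Submodule 𝕜 E) : Set E) := by
  set e : ℕ → E := u ∘ Sum.inl
  set f : ℕ → E := u ∘ Sum.inr
  have he : Orthonormal 𝕜 e := hu.comp _ Sum.inl_injective
  have hf : Orthonormal 𝕜 f := hu.comp _ Sum.inr_injective
  have hef (m n : ℕ) : ⟪e m, f n⟫_𝕜 = 0 := hu.inner_eq_zero Sum.inl_ne_inr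
  set t : ℕ → 𝕜 := fun n => 2⁻¹ ^ n
  have ht (n : ℕ) : t n ≠ 0 := pow_ne_zero _ (inv_ne_zero two_ne_zero)
  set A := (span 𝕜 (Set.range e)).topologicalClosure
  set B := (span 𝕜 (Set.range fun n => e n + t n • f n)).topologicalClosure
  refine ⟨A, B, isClosed_topologicalClosure _, isClosed_topologicalClosure _, fun hAB => ?_⟩
  have hfA (m : ℕ) (a : E) (ha : a ∈ A) : ⟪f m, a⟫_𝕜 = 0 :=
    inner_eq_zero_of_mem_topologicalClosure_span
      (by rintro _ ⟨n, rfl⟩; exact inner_eq_zero_symm.mp (hef n m)) ha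
  have hfB (m : ℕ) (b : E) (hb : b ∈ B) : ⟪f m, b⟫_𝕜 = t m * ⟪e m, b⟫_𝕜 := by
    -- `f m - conj (t m) • e m` is orthogonal to every generator `e n + t n • f n` of `B`
    have := inner_eq_zero_of_mem_topologicalClosure_span (x := f m - conj (t m) • e m) ?_ hb
    · rwa [inner_sub_left, inner_smul_left, RCLike.conj_conj, sub_eq_zero] at this
    rintro _ ⟨n, rfl⟩
    rcases eq_or_ne m n with rfl | hmn
    · simp [inner_add_right, inner_sub_left, inner_smul_left, inner_smul_right, hef,
        inner_eq_zero_symm.mp (hef m m), inner_self_eq_norm_sq_to_K, he.norm_eq_one m, hf.norm_eq_one m]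
    · simp [inner_add_right, inner_sub_left, inner_smul_left, inner_smul_right, hef,
        inner_eq_zero_symm.mp (hef n m), he.inner_eq_zero hmn, hf.inner_eq_zero hmn]
  obtain ⟨w, hw⟩ : Summable fun n => t n • f n := by
    refine Summable.of_norm ?_
    simpa [t, norm_smul, hf.norm_eq_one] using summable_geometric_two
  have hw_mem : w ∈ A ⊔ B := by
    rw [← hAB.submodule_topologicalClosure_eq]
    refine (isClosed_topologicalClosure _).mem_of_tendsto hw
      (Filter.Eventually.of_forall fun s => sum_mem fun n _ => le_topologicalClosure _ ?_)
    have : t n • f n = (e n + t n • f n) - e n := by abel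
    rw [this]
    exact sub_mem (mem_sup_right (le_topologicalClosure _ (subset_span ⟨n, rfl⟩)))
      (mem_sup_left (le_topologicalClosure _ (subset_span ⟨n, rfl⟩)))
  obtain ⟨a, ha, b, hb, rfl⟩ := mem_sup.mp hw_mem
  have heb (m : ℕ) : ⟪e m, b⟫_𝕜 = 1 := by
    have := hf.inner_eq_of_hasSum hw m
    rw [inner_add_right, hfA m a ha, zero_add, hfB m b hb] at this
    exact (mul_eq_left₀ (ht m)).mp this
  have := he.inner_products_summable b
  simp only [heb, norm_one, one_pow, summable_const_iff] at this
  exact one_ne_zero this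

end InnerProductSpace

/-- A complex Hilbert space is finite-dimensional iff the lattice of its closed subspaces
is modular: for all closed subspaces `X ≤ Y` and `Z`,
`closure (X + (Z ⊓ Y)) = closure (X + Z) ⊓ Y`. -/
theorem finiteDimensional_iff_modular {H : Type*} [NormedAddCommGroup H]
    [InnerProductSpace ℂ H] [CompleteSpace H] :
    FiniteDimensional ℂ H ↔
      ∀ X Y Z : Submodule ℂ H, IsClosed (X : Set H) → IsClosed (Y : Set H) →
        IsClosed (Z : Set H) → X ≤ Y →
          (X + Z ⊓ Y).topologicalClosure = (X + Z).topologicalClosure ⊓ Y := by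
  refine ⟨fun _ X Y Z _ _ _ hXY => ?_, fun hmod => ?_⟩
  · simp only [fun W : Submodule ℂ H => W.closed_of_finiteDimensional.submodule_topologicalClosure_eq,
      Submodule.add_eq_sup]
    exact (sup_inf_assoc_of_le Z hXY).symm
  · by_contra hinf
    obtain ⟨u, hu⟩ := exists_orthonormal_of_not_finiteDimensional (ℕ ⊕ ℕ) hinf
    obtain ⟨A, B, hA, hB, hAB⟩ := exists_isClosed_not_isClosed_sup hu
    obtain ⟨Y, hY, hAY, hne⟩ := exists_not_modular_of_not_isClosed_sup hA hAB
    exact hne (hmod A Y B hA hY hB hAY)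
end

section
/- Let H be a complex Hilbert space and let X, Y be closed subspaces of H. Then X ⊓ closure(Xᗮ + (X ⊓ Y)) ≤ Y, i.e., X ⊓ (X → Y) ≤ Y for the Sasaki implication. (This is the soundness, in the lattice of closed subspaces of a Hilbert space, of the quantum-logic modus ponens axiom QL11: β ∧ ¬(β ∧ ¬(β ∧ γ)) ⊢ γ.) -/
/-!
Let `x ∈ X` be a limit of vectors `aₙ + bₙ` with `aₙ ∈ Xᗮ` and `bₙ ∈ X ⊓ Y`. Since `x - bₙ ∈ X`
is orthogonal to `aₙ`, Pythagoras gives `‖x - bₙ‖ ≤ ‖x - (aₙ + bₙ)‖`, so `bₙ → x` and `x` lies in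
the closed subspace `Y`.
-/

namespace Submodule

variable {𝕜 E : Type*} [RCLike 𝕜] [NormedAddCommGroup E] [InnerProductSpace 𝕜 E]

theorem norm_le_norm_add_of_mem_orthogonal {K : Submodule 𝕜 E} {u v : E} (hu : u ∈ K)
    (hv : v ∈ Kᗮ) : ‖u‖ ≤ ‖u + v‖ := by
  have hpyth := norm_add_sq_eq_norm_sq_add_norm_sq_of_inner_eq_zero u v
    (K.inner_right_of_mem_orthogonal hu hv)
  exact le_of_sq_le_sq (by nlinarith [sq_nonneg ‖v‖]) (norm_nonneg _)

theorem inf_topologicalClosure_orthogonal_add_le {K L : Submodule 𝕜 E} (hLK : L ≤ K) :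
    K ⊓ (Kᗮ + L).topologicalClosure ≤ L.topologicalClosure := by
  intro x hx
  obtain ⟨hxK, hx⟩ := mem_inf.mp hx
  rw [← SetLike.mem_coe, topologicalClosure_coe, Metric.mem_closure_iff] at hx ⊢
  intro ε hε
  obtain ⟨w, hw, hxw⟩ := hx ε hε
  obtain ⟨a, ha, b, hb, rfl⟩ := mem_sup.mp (add_eq_sup Kᗮ L ▸ hw)
  refine ⟨b, hb, lt_of_le_of_lt ?_ hxw⟩
  have hxb : x - b ∈ K := K.sub_mem hxK (hLK hb)
  calc dist x b = ‖x - b‖ := dist_eq_norm x b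
    _ ≤ ‖x - b + -a‖ := norm_le_norm_add_of_mem_orthogonal hxb (Kᗮ.neg_mem ha)
    _ = dist x (a + b) := by rw [dist_eq_norm]; congr 1; abel

end Submodule

theorem inf_sasaki_implication_le_general {H : Type*} [NormedAddCommGroup H]
    [InnerProductSpace ℂ H] (X Y : Submodule ℂ H)
    (hY : IsClosed (Y : Set H)) :
    X ⊓ (Xᗮ + X ⊓ Y).topologicalClosure ≤ Y :=
  (Submodule.inf_topologicalClosure_orthogonal_add_le inf_le_left).trans
    ((X ⊓ Y).topologicalClosure_minimal inf_le_right hY)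

/-- Soundness of the quantum-logic modus ponens (axiom QL11) in the lattice of closed
subspaces of a complex Hilbert space: `X ⊓ (X → Y) ≤ Y` for the Sasaki implication
`X → Y := closure (Xᗮ + (X ⊓ Y))`. -/
theorem inf_sasaki_implication_le {H : Type*} [NormedAddCommGroup H]
    [InnerProductSpace ℂ H] [CompleteSpace H] (X Y : Submodule ℂ H)
    (hX : IsClosed (X : Set H)) (hY : IsClosed (Y : Set H)) :
    X ⊓ (Xᗮ + X ⊓ Y).topologicalClosure ≤ Y :=
  inf_sasaki_implication_le_general X Y hY
end

section
/- Let H be a complex Hilbert space, let E : H →L[ℂ] H be a continuous linear operator, let ρ : H →L[ℂ] H be a positive operator, and let X be a closed subspace of H. Then supp(E ∘ ρ ∘ E†) ≤ X if and only if supp ρ ≤ (E†(Xᗮ))ᗮ, where E†(Xᗮ) denotes the image of Xᗮ under the adjoint E† (Schrödinger–Heisenberg duality, Lemma 2, for a quantum operation given by a single Kraus operator E). -/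
open ContinuousLinearMap

/-
Since `ρ ≥ 0`, `ρ = S * S` with `S = √ρ` self-adjoint, so `⟪y, ρ y⟫ = ‖S y‖²` and
`⟪y, ρ y⟫ = 0` forces `ρ y = 0`. Applied to `y = E† x`, where `⟪E† x, ρ E† x⟫ = ⟪x, E ρ E† x⟫`,
this gives `ker (E ρ E†) = (E†)⁻¹ (ker ρ)`. The theorem is then the chain
`supp (E ρ E†) ≤ X ↔ Xᗮ ≤ ker (E ρ E†) ↔ E† Xᗮ ≤ ker ρ ↔ supp ρ ≤ (E† Xᗮ)ᗮ`,
where the outer steps take orthogonal complements of closed subspaces.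
-/

theorem ContinuousLinearMap.IsPositive.apply_eq_zero_of_inner_eq_zero {H : Type*}
    [NormedAddCommGroup H] [InnerProductSpace ℂ H] [CompleteSpace H] {ρ : H →L[ℂ] H}
    (hρ : ρ.IsPositive) {y : H} (hy : inner ℂ y (ρ y) = 0) : ρ y = 0 := by
  set S := CFC.sqrt ρ
  have hS : IsSelfAdjoint S := (CFC.sqrt_nonneg ρ).isSelfAdjoint
  have hρS : ρ = S * S := (CFC.sqrt_mul_sqrt_self ρ ((nonneg_iff_isPositive ρ).mpr hρ)).symm
  have hSy : S y = 0 := by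
    rw [hρS, mul_apply_eq_comp, ← adjoint_inner_left, hS.adjoint_eq] at hy
    exact inner_self_eq_zero.mp hy
  rw [hρS, mul_apply_eq_comp, hSy, map_zero]

theorem ContinuousLinearMap.IsPositive.ker_comp_comp_adjoint {H K : Type*}
    [NormedAddCommGroup H] [InnerProductSpace ℂ H] [CompleteSpace H]
    [NormedAddCommGroup K] [InnerProductSpace ℂ K] [CompleteSpace K]
    {ρ : H →L[ℂ] H} (hρ : ρ.IsPositive) (E : H →L[ℂ] K) :
    LinearMap.ker ((E ∘L ρ ∘L adjoint E : K →L[ℂ] K) : K →ₗ[ℂ] K) =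
      (LinearMap.ker (ρ : H →ₗ[ℂ] H)).comap (adjoint E : K →ₗ[ℂ] H) := by
  ext x
  simp only [LinearMap.mem_ker, Submodule.mem_comap, coe_coe, comp_apply]
  refine ⟨fun h ↦ hρ.apply_eq_zero_of_inner_eq_zero ?_, fun h ↦ by rw [h, map_zero]⟩
  rw [adjoint_inner_left, h, inner_zero_right]

theorem Submodule.le_iff_orthogonal_le_orthogonal {𝕜 E : Type*} [RCLike 𝕜]
    [NormedAddCommGroup E] [InnerProductSpace 𝕜 E] {U K : Submodule 𝕜 E}
    [K.HasOrthogonalProjection] : U ≤ K ↔ Kᗮ ≤ Uᗮ :=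
  ⟨orthogonal_le, fun h ↦ le_orthogonal_orthogonal U |>.trans <|
    (orthogonal_le h).trans_eq (orthogonal_orthogonal K)⟩

/-- Schrödinger–Heisenberg duality (Lemma 2) for a quantum operation with a single Kraus
operator `E`: for a positive operator `ρ` and a closed subspace `X`,
`supp (E ρ E†) ≤ X ↔ supp ρ ≤ (E† Xᗮ)ᗮ`, where `supp σ = (ker σ)ᗮ`. -/
theorem schroedinger_heisenberg_duality {H : Type*} [NormedAddCommGroup H]
    [InnerProductSpace ℂ H] [CompleteSpace H] (E ρ : H →L[ℂ] H)
    (hρ : ρ.IsPositive) (X : Submodule ℂ H) (hX : IsClosed (X : Set H)) :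
    (LinearMap.ker ((E ∘L ρ ∘L adjoint E : H →L[ℂ] H) : H →ₗ[ℂ] H))ᗮ ≤ X ↔
      (LinearMap.ker (ρ : H →ₗ[ℂ] H))ᗮ ≤ (Xᗮ.map (adjoint E : H →ₗ[ℂ] H))ᗮ := by
  have : CompleteSpace X := hX.completeSpace_coe
  rw [Submodule.orthogonal_le_iff_orthogonal_le, hρ.ker_comp_comp_adjoint E,
    ← Submodule.map_le_iff_le_comap, Submodule.le_iff_orthogonal_le_orthogonal]
end

section
/- Let H be a complex Hilbert space, let A : H →L[ℂ] H be a positive operator, and let E : H →L[ℂ] H be any continuous linear operator. Then closure(range(E ∘ A ∘ E†)) = closure(E(range A)), where E(range A) is the image of the range of A under E. (This computes the support of the state E ρ E† obtained by applying a Kraus operator E, and underlies the image operation E(X) = ⋁_{ψ∈X} supp(E(|ψ⟩⟨ψ|)) of equation (10).) -/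
/-!
Both sides are closures of ranges, and the closure of the range of `S` is `(ker S†)ᗮ`. The adjoint
of `E A E†` is `E A E†` again and that of `E A` is `A E†`, so it suffices that
`ker (E A E†) = ker (A E†)`. Writing the positive operator as `A = B† B`, both kernels equal
`ker (B E†)`, since `E A E† = (B E†)† (B E†)` and `ker (C† C) = ker C`.
-/

open ContinuousLinearMap

namespace ContinuousLinearMap

theorem topologicalClosure_range_eq_orthogonal_ker_adjoint {𝕜 E F : Type*} [RCLike 𝕜]
    [NormedAddCommGroup E] [InnerProductSpace 𝕜 E] [CompleteSpace E]
    [NormedAddCommGroup F] [InnerProductSpace 𝕜 F] [CompleteSpace F] (T : E →L[𝕜] F) :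
    T.range.topologicalClosure = (adjoint T).kerᗮ := by
  simpa using (orthogonal_ker (adjoint T)).symm

namespace IsPositive

variable {H K : Type*} [NormedAddCommGroup H] [InnerProductSpace ℂ H] [CompleteSpace H]
  [NormedAddCommGroup K] [InnerProductSpace ℂ K] [CompleteSpace K]

theorem exists_eq_adjoint_comp_self {A : H →L[ℂ] H} (hA : A.IsPositive) :
    ∃ B : H →L[ℂ] H, A = adjoint B ∘L B :=
  CStarAlgebra.nonneg_iff_eq_star_mul_self.mp ((nonneg_iff_isPositive A).mpr hA)

theorem ker_comp_comp_adjoint_s11 {A : H →L[ℂ] H} (hA : A.IsPositive) (T : H →L[ℂ] K) :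
    (T ∘L A ∘L adjoint T).ker = (A ∘L adjoint T).ker := by
  obtain ⟨B, rfl⟩ := hA.exists_eq_adjoint_comp_self
  have hconj : T ∘L (adjoint B ∘L B) ∘L adjoint T =
      adjoint (B ∘L adjoint T) ∘L (B ∘L adjoint T) := by
    simp only [adjoint_comp, adjoint_adjoint, comp_assoc]
  rw [hconj, ker_adjoint_comp_self]
  ext x
  exact (SetLike.ext_iff.mp (ker_adjoint_comp_self B) (adjoint T x)).symm

end IsPositive

end ContinuousLinearMap

/-- The support of the state obtained by applying a single Kraus operator `E` to a positive
operator `A`: `closure (range (E A E†)) = closure (E (range A))`. -/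
theorem closure_range_kraus_conj {H : Type*} [NormedAddCommGroup H]
    [InnerProductSpace ℂ H] [CompleteSpace H] (A E : H →L[ℂ] H) (hA : A.IsPositive) :
    (LinearMap.range ((E ∘L A ∘L adjoint E : H →L[ℂ] H) : H →ₗ[ℂ] H)).topologicalClosure =
      ((LinearMap.range (A : H →ₗ[ℂ] H)).map (E : H →ₗ[ℂ] H)).topologicalClosure := by
  rw [← LinearMap.range_comp, ← toLinearMap_comp,
    topologicalClosure_range_eq_orthogonal_ker_adjoint,
    topologicalClosure_range_eq_orthogonal_ker_adjoint, adjoint_comp, adjoint_comp, adjoint_comp,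
    adjoint_adjoint, hA.isSelfAdjoint.adjoint_eq, comp_assoc, hA.ker_comp_comp_adjoint_s11 E]
end
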